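/- The functions e^{cx²}cos(x²), e^{cx²}sin(x²), and x¹ each satisfy the quasi-Einstein equation Hφ + φρ_s = 0 on M(c), where H is the Hessian with respect to ∇ and ρ_s = (1+c²)dx²⊗dx² is the symmetric Ricci tensor. -/

import Mathlib

/-!
A function of `x²` alone has Hessian with the single component `φ'' − 2c φ'` (in the `22` slot),
so the quasi-Einstein equation becomes the constant-coefficient ODE `φ'' − 2c φ' + (1+c²) φ = 0`,
whose characteristic roots are `c ± i`; its real solutions are `e^{ct} cos t` and `e^{ct} sin t`.
For `x¹` the gradient is the constant `dx¹`, so only the `22` component survives, and there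
`−Γ₂₂¹ · 1 = −(1+c²)x¹` cancels `x¹ ρ_s(∂₂, ∂₂)`.
-/

noncomputable def e : Fin 2 → ℝ × ℝ
  | 0 => (1, 0)
  | 1 => (0, 1)

noncomputable def pd (i : Fin 2) (f : ℝ × ℝ → ℝ) (p : ℝ × ℝ) : ℝ :=
  fderiv ℝ f p (e i)

/-- Christoffel symbols of `M(c)`. -/
noncomputable def Γ (c : ℝ) (i j k : Fin 2) (p : ℝ × ℝ) : ℝ :=
  if i = 1 ∧ j = 1 then (if k = 0 then (1 + c ^ 2) * p.1 else 2 * c) else 0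

/-- The Hessian `(Hφ)_{ij} = ∂ᵢ∂ⱼφ − Σ_k Γ_{ij}^k ∂ₖφ`. -/
noncomputable def Hess (c : ℝ) (i j : Fin 2) (φ : ℝ × ℝ → ℝ) (p : ℝ × ℝ) : ℝ :=
  pd i (fun q => pd j φ q) p - ∑ k : Fin 2, Γ c i j k p * pd k φ p

/-- The symmetric Ricci tensor `ρ_s = (1+c²)dx²⊗dx²` of `M(c)`. -/
noncomputable def rhoS (c : ℝ) (i j : Fin 2) : ℝ :=
  if i = 1 ∧ j = 1 then 1 + c ^ 2 else 0

/-- `φ` solves the quasi-Einstein equation `Hφ + φρ_s = 0` on `M(c)`. -/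
def QuasiEinstein (c : ℝ) (φ : ℝ × ℝ → ℝ) : Prop :=
  ∀ i j : Fin 2, ∀ p : ℝ × ℝ, Hess c i j φ p + φ p * rhoS c i j = 0

lemma pd_const (a : ℝ) (i : Fin 2) (p : ℝ × ℝ) :
    pd i (fun _ => a) p = 0 := by
  simp [pd]

lemma pd_fst (i : Fin 2) (p : ℝ × ℝ) :
    pd i Prod.fst p = if i = 0 then 1 else 0 := by
  rw [pd, (hasFDerivAt_fst (p := p)).fderiv]
  fin_cases i <;> simp [e]

lemma pd_comp_snd {g g' : ℝ → ℝ} (hg : ∀ t, HasDerivAt g (g' t) t) (i : Fin 2) (p : ℝ × ℝ) :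
    pd i (fun q => g q.2) p = if i = 1 then g' p.2 else 0 := by
  have hφ : HasFDerivAt (fun q : ℝ × ℝ => g q.2) (g' p.2 • ContinuousLinearMap.snd ℝ ℝ ℝ) p :=
    (hg p.2).comp_hasFDerivAt p hasFDerivAt_snd
  rw [pd, hφ.fderiv]
  fin_cases i <;> simp [e]

theorem quasiEinstein_fst (c : ℝ) : QuasiEinstein c Prod.fst := by
  intro i j p
  fin_cases i <;> fin_cases j <;>
    simp [Hess, Γ, rhoS, pd_const, pd_fst]
  ring

theorem quasiEinstein_comp_snd {c : ℝ} {g g' g'' : ℝ → ℝ}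
    (hg : ∀ t, HasDerivAt g (g' t) t) (hg' : ∀ t, HasDerivAt g' (g'' t) t)
    (hode : ∀ t, g'' t - 2 * c * g' t + (1 + c ^ 2) * g t = 0) :
    QuasiEinstein c (fun p => g p.2) := by
  intro i j p
  fin_cases i <;> fin_cases j <;>
    simp [Hess, Γ, rhoS, pd_const, pd_comp_snd hg, pd_comp_snd hg']
  linear_combination hode p.2

-- `g = e^{ct} u` gives `g'' − 2c g' + (1+c²) g = e^{ct} (u'' + u)`.
theorem quasiEinstein_exp_mul_harmonic (c : ℝ) {u u' : ℝ → ℝ}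
    (hu : ∀ t, HasDerivAt u (u' t) t) (hu' : ∀ t, HasDerivAt u' (-u t) t) :
    QuasiEinstein c (fun p => Real.exp (c * p.2) * u p.2) := by
  have hexp (t : ℝ) : HasDerivAt (fun s => Real.exp (c * s)) (Real.exp (c * t) * c) t := by
    simpa using ((hasDerivAt_id t).const_mul c).exp
  refine quasiEinstein_comp_snd (g := fun t => Real.exp (c * t) * u t)
    (g' := fun t => Real.exp (c * t) * (c * u t + u' t))
    (g'' := fun t => Real.exp (c * t) * (c ^ 2 * u t + 2 * c * u' t - u t))
    (fun t => ((hexp t).fun_mul (hu t)).congr_deriv (by ring))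
    (fun t => ((hexp t).fun_mul (((hu t).const_mul c).fun_add (hu' t))).congr_deriv (by ring))
    (fun t => by ring)

/-- the functions `e^{cx²}cos(x²)`, `e^{cx²}sin(x²)` and `x¹`
satisfy the quasi-Einstein equation on `M(c)`. -/
theorem quasiEinstein_solutions (c : ℝ) :
    QuasiEinstein c (fun p => Real.exp (c * p.2) * Real.cos p.2) ∧
    QuasiEinstein c (fun p => Real.exp (c * p.2) * Real.sin p.2) ∧
    QuasiEinstein c (fun p => p.1) :=
  ⟨quasiEinstein_exp_mul_harmonic c Real.hasDerivAt_cos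
      fun t => (Real.hasDerivAt_sin t).fun_neg,
    quasiEinstein_exp_mul_harmonic c Real.hasDerivAt_sin Real.hasDerivAt_cos,
    quasiEinstein_fst c⟩
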